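/- Under the setting of the error-accumulation lemma, and additionally with δ_∞ = ‖(Û^T O)^T b̂_∞ − 1_m‖_∞, the total variation error of the estimated joint distribution satisfies, for any t ≥ 1: Σ_{x_{1:t}} |Pr[x_{1:t}] − b̂_∞^T B̂_{x_t}⋯B̂_{x_1} b̂_1| ≤ δ_∞ + (1 + δ_∞)((1+Δ)^t δ_1 + (1+Δ)^t − 1). -/

import Mathlib

/-!
Conjugating by `S = Ûᵀ O` turns the estimated model into the operators `S⁻¹ B̂ₓ S` acting on
`S⁻¹ b̂₁`, and `b̂_∞ᵀ w = (Sᵀ b̂_∞)ᵀ (S⁻¹ w)`, so everything reduces to comparing two products of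
`m × m` matrices in the ℓ¹ norm. The true operators are nonnegative and `∑ₓ Aₓ` is column
stochastic, so summing over one more symbol never increases total ℓ¹ mass. Writing
`B̃ₓ u - Aₓ p = (B̃ₓ - Aₓ) u + Aₓ (u - p)` then shows that "mass plus error" grows by at most the
factor `1 + Δ` per symbol, which gives `(1 + Δ)ᵗ (1 + δ₁) - 1` for the summed ℓ¹ error of the
state vectors. Pairing with `Sᵀ b̂_∞` instead of the all-ones vector costs `δ_∞` per unit of ℓ¹
norm.
-/

open Matrix

/-- Vector 1-norm. -/
def l1norm {m : ℕ} (v : Fin m → ℝ) : ℝ := ∑ i, |v i|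

/-- Vector ∞-norm. -/
noncomputable def linfnorm {m : ℕ} (v : Fin m → ℝ) : ℝ := ⨆ i : Fin m, |v i|

/-- Operator norm induced by the vector 1-norm (max column sum). -/
noncomputable def opL1 {m : ℕ} (M : Matrix (Fin m) (Fin m) ℝ) : ℝ :=
  ⨆ j : Fin m, ∑ i, |M i j|

lemma l1norm_eq_sum_of_nonneg {m : ℕ} {v : Fin m → ℝ} (hv : ∀ i, 0 ≤ v i) :
    l1norm v = ∑ i, v i :=
  Finset.sum_congr rfl fun i _ => abs_of_nonneg (hv i)

lemma l1norm_add_le {m : ℕ} (u v : Fin m → ℝ) : l1norm (u + v) ≤ l1norm u + l1norm v := by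
  rw [l1norm, l1norm, l1norm, ← Finset.sum_add_distrib]
  exact Finset.sum_le_sum fun i _ => abs_add_le _ _

lemma l1norm_le_add_l1norm_sub {m : ℕ} (u v : Fin m → ℝ) :
    l1norm u ≤ l1norm v + l1norm (u - v) := by
  simpa using l1norm_add_le v (u - v)

lemma abs_sum_le_l1norm {m : ℕ} (v : Fin m → ℝ) : |∑ i, v i| ≤ l1norm v :=
  Finset.abs_sum_le_sum_abs _ _

lemma linfnorm_nonneg {m : ℕ} (v : Fin m → ℝ) : 0 ≤ linfnorm v :=
  Real.iSup_nonneg fun _ => abs_nonneg _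

lemma abs_le_linfnorm {m : ℕ} (v : Fin m → ℝ) (i : Fin m) : |v i| ≤ linfnorm v :=
  le_ciSup (f := fun i => |v i|) (Finite.bddAbove_range _) i

lemma opL1_nonneg {m : ℕ} (M : Matrix (Fin m) (Fin m) ℝ) : 0 ≤ opL1 M :=
  Real.iSup_nonneg fun _ => Finset.sum_nonneg fun _ _ => abs_nonneg _

lemma sum_abs_le_opL1 {m : ℕ} (M : Matrix (Fin m) (Fin m) ℝ) (j : Fin m) :
    ∑ i, |M i j| ≤ opL1 M :=
  le_ciSup (f := fun j => ∑ i, |M i j|) (Finite.bddAbove_range _) j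

lemma abs_dotProduct_le {m : ℕ} (u v : Fin m → ℝ) : |u ⬝ᵥ v| ≤ linfnorm u * l1norm v := by
  calc |u ⬝ᵥ v| ≤ ∑ i, |u i| * |v i| := by
        simpa only [dotProduct, abs_mul] using Finset.abs_sum_le_sum_abs (fun i => u i * v i) _
    _ ≤ ∑ i, linfnorm u * |v i| := by gcongr with i; exact abs_le_linfnorm u i
    _ = linfnorm u * l1norm v := (Finset.mul_sum _ _ _).symm

lemma l1norm_mulVec_le {m : ℕ} (M : Matrix (Fin m) (Fin m) ℝ) (v : Fin m → ℝ) :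
    l1norm (M *ᵥ v) ≤ opL1 M * l1norm v := by
  calc l1norm (M *ᵥ v) ≤ ∑ i, ∑ j, |M i j| * |v j| := by
        unfold l1norm
        gcongr with i
        simpa only [mulVec, dotProduct, abs_mul] using
          Finset.abs_sum_le_sum_abs (fun j => M i j * v j) Finset.univ
    _ = ∑ j, (∑ i, |M i j|) * |v j| := by simp only [Finset.sum_mul]; exact Finset.sum_comm
    _ ≤ ∑ j, opL1 M * |v j| := by gcongr with j; exact sum_abs_le_opL1 M j
    _ = opL1 M * l1norm v := (Finset.mul_sum _ _ _).symm

section Words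

variable {ι : Type*} [Fintype ι] {m : ℕ}

lemma sum_pi_fin_succ {M : Type*} [AddCommMonoid M] {t : ℕ} (g : (Fin (t + 1) → ι) → M) :
    ∑ xs, g xs = ∑ y, ∑ xs : Fin t → ι, g (Fin.cons y xs) := by
  rw [← Fintype.sum_prod_type']
  exact (Fintype.sum_equiv (Fin.consEquiv fun _ => ι) _ _ fun _ => rfl).symm

lemma sum_l1norm_mulVec_le {A : ι → Matrix (Fin m) (Fin m) ℝ}
    (hA : ∀ j, ∑ y, ∑ i, |A y i j| ≤ 1) (w : Fin m → ℝ) :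
    ∑ y, l1norm (A y *ᵥ w) ≤ l1norm w := by
  calc ∑ y, l1norm (A y *ᵥ w) ≤ ∑ y, ∑ i, ∑ j, |A y i j| * |w j| := by
        unfold l1norm
        gcongr with y _ i
        simpa only [mulVec, dotProduct, abs_mul] using
          Finset.abs_sum_le_sum_abs (fun j => A y i j * w j) Finset.univ
    _ = ∑ j, (∑ y, ∑ i, |A y i j|) * |w j| := by
        simp only [Finset.sum_mul]
        exact (Finset.sum_congr rfl fun y _ => Finset.sum_comm).trans Finset.sum_comm
    _ ≤ ∑ j, |w j| := by gcongr with j; exact mul_le_of_le_one_left (abs_nonneg _) (hA j)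

lemma sum_sum_abs_mul_diagonal_eq_one {T : Matrix (Fin m) (Fin m) ℝ} {O : Matrix ι (Fin m) ℝ}
    (hTnn : ∀ i j, 0 ≤ T i j) (hTcol : ∀ j, ∑ i, T i j = 1)
    (hOnn : ∀ x j, 0 ≤ O x j) (hOcol : ∀ j, ∑ x, O x j = 1) (j : Fin m) :
    ∑ y, ∑ i, |(T * diagonal (fun i => O y i)) i j| = 1 := by
  simp only [mul_diagonal, abs_mul, abs_of_nonneg (hTnn _ _), abs_of_nonneg (hOnn _ _),
    ← Finset.sum_mul, hTcol, one_mul, hOcol]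

lemma sum_l1norm_foldl_mulVec_le {A : ι → Matrix (Fin m) (Fin m) ℝ}
    (hA : ∀ j, ∑ y, ∑ i, |A y i j| ≤ 1) (t : ℕ) (p : Fin m → ℝ) :
    ∑ xs : Fin t → ι, l1norm ((List.ofFn xs).foldl (fun v y => A y *ᵥ v) p) ≤ l1norm p := by
  induction t generalizing p with
  | zero => simp
  | succ t ih =>
    simp only [sum_pi_fin_succ, List.ofFn_cons, List.foldl_cons]
    calc _ ≤ ∑ y, l1norm (A y *ᵥ p) := Finset.sum_le_sum fun y _ => ih _
      _ ≤ l1norm p := sum_l1norm_mulVec_le hA p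

lemma sum_l1norm_mulVec_sub_mulVec_le {A : ι → Matrix (Fin m) (Fin m) ℝ}
    (hA : ∀ j, ∑ y, ∑ i, |A y i j| ≤ 1) (B : ι → Matrix (Fin m) (Fin m) ℝ) (u p : Fin m → ℝ) :
    ∑ y, l1norm (B y *ᵥ u - A y *ᵥ p)
      ≤ (∑ y, opL1 (B y - A y)) * l1norm u + l1norm (u - p) := by
  have hsplit : ∀ y, B y *ᵥ u - A y *ᵥ p = (B y - A y) *ᵥ u + A y *ᵥ (u - p) := fun y => by
    rw [sub_mulVec, mulVec_sub]; abel
  calc ∑ y, l1norm (B y *ᵥ u - A y *ᵥ p)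
      ≤ ∑ y, (opL1 (B y - A y) * l1norm u + l1norm (A y *ᵥ (u - p))) := by
        gcongr with y
        rw [hsplit]
        exact (l1norm_add_le _ _).trans (add_le_add (l1norm_mulVec_le _ _) le_rfl)
    _ ≤ (∑ y, opL1 (B y - A y)) * l1norm u + l1norm (u - p) := by
        rw [Finset.sum_add_distrib, Finset.sum_mul]
        exact add_le_add le_rfl (sum_l1norm_mulVec_le hA _)

theorem sum_l1norm_foldl_mulVec_sub_le {A : ι → Matrix (Fin m) (Fin m) ℝ}
    (hA : ∀ j, ∑ y, ∑ i, |A y i j| ≤ 1) (B : ι → Matrix (Fin m) (Fin m) ℝ) (t : ℕ)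
    (u p : Fin m → ℝ) :
    ∑ xs : Fin t → ι, l1norm ((List.ofFn xs).foldl (fun v y => B y *ᵥ v) u
        - (List.ofFn xs).foldl (fun v y => A y *ᵥ v) p)
      ≤ (1 + ∑ y, opL1 (B y - A y)) ^ t * (l1norm p + l1norm (u - p)) - l1norm p := by
  set Δ := ∑ y, opL1 (B y - A y)
  have hΔ : 0 ≤ Δ := Finset.sum_nonneg fun y _ => opL1_nonneg _
  induction t generalizing u p with
  | zero => simp
  | succ t ih =>
    have hK : 1 ≤ (1 + Δ) ^ t := one_le_pow₀ (by linarith)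
    have hAp := sum_l1norm_mulVec_le hA p
    have hstep := sum_l1norm_mulVec_sub_mulVec_le hA B u p
    have hu := l1norm_le_add_l1norm_sub u p
    simp only [sum_pi_fin_succ, List.ofFn_cons, List.foldl_cons]
    calc _ ≤ ∑ y, ((1 + Δ) ^ t * (l1norm (A y *ᵥ p) + l1norm (B y *ᵥ u - A y *ᵥ p))
          - l1norm (A y *ᵥ p)) := Finset.sum_le_sum fun y _ => ih _ _
      _ = ((1 + Δ) ^ t - 1) * ∑ y, l1norm (A y *ᵥ p)
          + (1 + Δ) ^ t * ∑ y, l1norm (B y *ᵥ u - A y *ᵥ p) := by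
        simp only [Finset.mul_sum, ← Finset.sum_add_distrib]
        exact Finset.sum_congr rfl fun y _ => by ring
      _ ≤ ((1 + Δ) ^ t - 1) * l1norm p + (1 + Δ) ^ t * (Δ * l1norm u + l1norm (u - p)) := by
        gcongr
      _ ≤ ((1 + Δ) ^ t - 1) * l1norm p
          + (1 + Δ) ^ t * (Δ * (l1norm p + l1norm (u - p)) + l1norm (u - p)) := by
        gcongr
      _ = (1 + Δ) ^ (t + 1) * (l1norm p + l1norm (u - p)) - l1norm p := by ring

end Words

lemma foldl_mulVec_conj {n ι R : Type*} [Fintype n] [DecidableEq n] [Semiring R]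
    {S P : Matrix n n R} (hSP : S * P = 1) (B : ι → Matrix n n R) (xs : List ι) (b : n → R) :
    P *ᵥ xs.foldl (fun v y => B y *ᵥ v) b = xs.foldl (fun v y => (P * B y * S) *ᵥ v) (P *ᵥ b) := by
  induction xs generalizing b with
  | nil => rfl
  | cons y xs ih =>
    rw [List.foldl_cons, List.foldl_cons, ih, mulVec_mulVec, mulVec_mulVec, Matrix.mul_assoc _ S,
      hSP, Matrix.mul_one]

lemma abs_one_dotProduct_sub_dotProduct_le {m : ℕ} {S P : Matrix (Fin m) (Fin m) ℝ}
    (hSP : S * P = 1) (c v w : Fin m → ℝ) :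
    |(fun _ => (1 : ℝ)) ⬝ᵥ v - c ⬝ᵥ w|
      ≤ linfnorm (Sᵀ *ᵥ c - fun _ => 1) * l1norm v
        + (1 + linfnorm (Sᵀ *ᵥ c - fun _ => 1)) * l1norm (P *ᵥ w - v) := by
  set u := P *ᵥ w
  set δ := linfnorm (Sᵀ *ᵥ c - fun _ => 1)
  have hw : c ⬝ᵥ w = (Sᵀ *ᵥ c) ⬝ᵥ u := by
    rw [mulVec_transpose, ← dotProduct_mulVec, mulVec_mulVec, hSP, one_mulVec]
  have hsplit : (fun _ => (1 : ℝ)) ⬝ᵥ v - c ⬝ᵥ w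
      = -((Sᵀ *ᵥ c - fun _ => 1) ⬝ᵥ u + (fun _ => (1 : ℝ)) ⬝ᵥ (u - v)) := by
    rw [hw, sub_dotProduct, dotProduct_sub]; ring
  have hu := l1norm_le_add_l1norm_sub u v
  calc _ ≤ δ * l1norm u + l1norm (u - v) := by
        rw [hsplit, abs_neg]
        refine (abs_add_le _ _).trans (add_le_add (abs_dotProduct_le _ _) ?_)
        simpa [dotProduct] using abs_sum_le_l1norm (u - v)
    _ ≤ δ * (l1norm v + l1norm (u - v)) + l1norm (u - v) := by
        gcongr; exact linfnorm_nonneg _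
    _ = δ * l1norm v + (1 + δ) * l1norm (u - v) := by ring

theorem hmm_joint_l1_bound_general (m n t : ℕ)
    (T : Matrix (Fin m) (Fin m) ℝ) (O : Matrix (Fin n) (Fin m) ℝ) (π : Fin m → ℝ)
    (hTnn : ∀ i j, 0 ≤ T i j) (hTcol : ∀ j, ∑ i, T i j = 1)
    (hOnn : ∀ x j, 0 ≤ O x j) (hOcol : ∀ j, ∑ x, O x j = 1)
    (hπnn : ∀ i, 0 ≤ π i) (hπsum : ∑ i, π i = 1)
    (A : Fin n → Matrix (Fin m) (Fin m) ℝ)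
    (hA : ∀ y, A y = T * Matrix.diagonal (fun i => O y i))
    (Uhat : Matrix (Fin n) (Fin m) ℝ) (hU : IsUnit (Uhatᵀ * O))
    (Bhat : Fin n → Matrix (Fin m) (Fin m) ℝ) (b1hat binfhat : Fin m → ℝ)
    (Δx : Fin n → ℝ)
    (hΔx : ∀ y, Δx y = opL1 ((Uhatᵀ * O)⁻¹ * Bhat y * (Uhatᵀ * O) - A y))
    (Δ : ℝ) (hΔ : Δ = ∑ y, Δx y)
    (δ₁ : ℝ) (hδ₁ : δ₁ = l1norm (((Uhatᵀ * O)⁻¹).mulVec b1hat - π))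
    (δinf : ℝ) (hδinf : δinf = linfnorm ((Uhatᵀ * O)ᵀ.mulVec binfhat - fun _ => (1 : ℝ))) :
    ∑ xs : Fin t → Fin n,
        |dotProduct (fun _ => (1 : ℝ))
            ((List.ofFn xs).foldl (fun v y => (A y).mulVec v) π)
          - dotProduct binfhat
            ((List.ofFn xs).foldl (fun v y => (Bhat y).mulVec v) b1hat)|
      ≤ δinf + (1 + δinf) * ((1 + Δ) ^ t * δ₁ + (1 + Δ) ^ t - 1) := by
  set S := Uhatᵀ * O
  have hS : S * S⁻¹ = 1 := mul_nonsing_inv S ((isUnit_iff_isUnit_det S).mp hU)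
  have hAcol (j : Fin m) : ∑ y, ∑ i, |A y i j| ≤ 1 := by
    simp only [hA, sum_sum_abs_mul_diagonal_eq_one hTnn hTcol hOnn hOcol j, le_refl]
  have hπ : l1norm π = 1 := (l1norm_eq_sum_of_nonneg hπnn).trans hπsum
  have hδinf0 : 0 ≤ δinf := hδinf ▸ linfnorm_nonneg _
  have hΔeq : Δ = ∑ y, opL1 (S⁻¹ * Bhat y * S - A y) := by simp only [hΔ, hΔx]
  calc _ ≤ ∑ xs : Fin t → Fin n,
        (δinf * l1norm ((List.ofFn xs).foldl (fun v y => A y *ᵥ v) π)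
          + (1 + δinf) * l1norm ((List.ofFn xs).foldl (fun v y => (S⁻¹ * Bhat y * S) *ᵥ v)
              (S⁻¹ *ᵥ b1hat) - (List.ofFn xs).foldl (fun v y => A y *ᵥ v) π)) := by
        gcongr with xs
        rw [hδinf, ← foldl_mulVec_conj hS]
        exact abs_one_dotProduct_sub_dotProduct_le hS _ _ _
    _ ≤ δinf * l1norm π + (1 + δinf) * ((1 + Δ) ^ t * (l1norm π + δ₁) - l1norm π) := by
        rw [Finset.sum_add_distrib, ← Finset.mul_sum, ← Finset.mul_sum, hΔeq, hδ₁]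
        gcongr
        · exact sum_l1norm_foldl_mulVec_le hAcol t π
        · exact sum_l1norm_foldl_mulVec_sub_le hAcol _ t _ π
    _ = δinf + (1 + δinf) * ((1 + Δ) ^ t * δ₁ + (1 + Δ) ^ t - 1) := by rw [hπ]; ring

/-- total variation bound for joint probabilities: with the setting of the
error-accumulation lemma and `δ_∞ = ‖(Ûᵀ O)ᵀ b̂_∞ − 1ₘ‖_∞`, for any `t ≥ 1`:
`Σ_{x_{1:t}} |Pr[x_{1:t}] − b̂_∞ᵀ B̂_{x_t}⋯B̂_{x_1} b̂₁|
  ≤ δ_∞ + (1 + δ_∞)((1+Δ)^t δ₁ + (1+Δ)^t − 1)`,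
where `Pr[x_{1:t}] = 1ₘᵀ A_{x_t}⋯A_{x_1} π`. -/
theorem hmm_joint_l1_bound (m n t : ℕ) (hm : 0 < m) (ht : 1 ≤ t)
    (T : Matrix (Fin m) (Fin m) ℝ) (O : Matrix (Fin n) (Fin m) ℝ) (π : Fin m → ℝ)
    (hTnn : ∀ i j, 0 ≤ T i j) (hTcol : ∀ j, ∑ i, T i j = 1)
    (hOnn : ∀ x j, 0 ≤ O x j) (hOcol : ∀ j, ∑ x, O x j = 1)
    (hπnn : ∀ i, 0 ≤ π i) (hπsum : ∑ i, π i = 1)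
    (A : Fin n → Matrix (Fin m) (Fin m) ℝ)
    (hA : ∀ y, A y = T * Matrix.diagonal (fun i => O y i))
    (Uhat : Matrix (Fin n) (Fin m) ℝ) (hU : IsUnit (Uhatᵀ * O))
    (Bhat : Fin n → Matrix (Fin m) (Fin m) ℝ) (b1hat binfhat : Fin m → ℝ)
    (Δx : Fin n → ℝ)
    (hΔx : ∀ y, Δx y = opL1 ((Uhatᵀ * O)⁻¹ * Bhat y * (Uhatᵀ * O) - A y))
    (Δ : ℝ) (hΔ : Δ = ∑ y, Δx y)
    (δ₁ : ℝ) (hδ₁ : δ₁ = l1norm (((Uhatᵀ * O)⁻¹).mulVec b1hat - π))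
    (δinf : ℝ) (hδinf : δinf = linfnorm ((Uhatᵀ * O)ᵀ.mulVec binfhat - fun _ => (1 : ℝ))) :
    ∑ xs : Fin t → Fin n,
        |dotProduct (fun _ => (1 : ℝ))
            ((List.ofFn xs).foldl (fun v y => (A y).mulVec v) π)
          - dotProduct binfhat
            ((List.ofFn xs).foldl (fun v y => (Bhat y).mulVec v) b1hat)|
      ≤ δinf + (1 + δinf) * ((1 + Δ) ^ t * δ₁ + (1 + Δ) ^ t - 1) :=
  hmm_joint_l1_bound_general m n t T O π hTnn hTcol hOnn hOcol hπnn hπsum A hA Uhat hU Bhat b1hat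
    binfhat Δx hΔx Δ hΔ δ₁ hδ₁ δinf hδinf
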